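/- arXiv:2507.05712 — 2 statements merged into one kernel-verified Lean document; each statement's English description precedes it below -/
import Mathlib

section
/- Let α = (α₁,…,α_n) with α_i ≥ 1 for all i, and let z ∈ ℝⁿ with z_i ≠ 0 for every i. Then the function w ↦ |w|_α is twice differentiable at z and its Hessian is D²|z|_α = (1/|z|_α) · D_s ( diag(2α₁−1,…,2α_n−1) − v vᵀ ) D_s, where D_s = diag(sgn(z₁)|z₁|^{α₁−1},…,sgn(z_n)|z_n|^{α_n−1}) and v ∈ ℝⁿ has components v_i = |z_i|^{α_i}/|z|_α. -/
noncomputable section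
open Real Topology Filter

/-- The anisotropic distance `|z|_α = ( Σ_i (1/α_i)|z_i|^{2α_i} )^{1/2}`. -/
def anorm {n : ℕ} (α : Fin n → ℝ) (z : EuclideanSpace ℝ (Fin n)) : ℝ :=
  Real.sqrt (∑ i, (1 / α i) * |z i| ^ (2 * α i))

namespace AnormAux

variable {n : ℕ} (α : Fin n → ℝ) (z : EuclideanSpace ℝ (Fin n))

def G (w : EuclideanSpace ℝ (Fin n)) : ℝ :=
  ∑ i, (1 / α i) * (Real.sign (z i) * w i) ^ (2 * α i)

def U : Set (EuclideanSpace ℝ (Fin n)) := {w | ∀ i, 0 < Real.sign (z i) * w i}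

lemma sign_mul_self {x : ℝ} (hx : x ≠ 0) : Real.sign x * x = |x| := by
  rcases hx.lt_or_gt with h | h
  · rw [Real.sign_of_neg h, abs_of_neg h]; ring
  · rw [Real.sign_of_pos h, abs_of_pos h]; ring

lemma sign_sq {x : ℝ} (hx : x ≠ 0) : Real.sign x * Real.sign x = 1 := by
  rcases hx.lt_or_gt with h | h
  · rw [Real.sign_of_neg h]; ring
  · rw [Real.sign_of_pos h]; ring

lemma abs_sign {x : ℝ} (hx : x ≠ 0) : |Real.sign x| = 1 := by
  rcases hx.lt_or_gt with h | h
  · rw [Real.sign_of_neg h]; simp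
  · rw [Real.sign_of_pos h]; simp

lemma isOpen_U : IsOpen (U z) := by
  have : U z = ⋂ i, (fun w : EuclideanSpace ℝ (Fin n) => Real.sign (z i) * w i) ⁻¹' Set.Ioi 0 := by
    ext w; simp [U, Set.mem_iInter]
  rw [this]
  exact isOpen_iInter_of_finite fun i =>
    isOpen_Ioi.preimage (continuous_const.mul (EuclideanSpace.proj i).continuous)

lemma z_mem_U (hz : ∀ i, z i ≠ 0) : z ∈ U z := fun i => by
  rw [sign_mul_self (hz i)]; exact abs_pos.2 (hz i)

lemma abs_eq_of_mem (hz : ∀ i, z i ≠ 0) {w : EuclideanSpace ℝ (Fin n)} (hw : w ∈ U z) (i : Fin n) :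
    Real.sign (z i) * w i = |w i| := by
  have h := abs_of_pos (hw i)
  rw [← h, abs_mul, abs_sign (hz i), one_mul]

lemma anorm_eq (hz : ∀ i, z i ≠ 0) {w : EuclideanSpace ℝ (Fin n)} (hw : w ∈ U z) :
    anorm α w = Real.sqrt (G α z w) := by
  unfold anorm G
  congr 1
  exact Finset.sum_congr rfl fun i _ => by rw [abs_eq_of_mem z hz hw i]

lemma G_pos [Nonempty (Fin n)] (hα : ∀ i, 1 ≤ α i) {w : EuclideanSpace ℝ (Fin n)}
    (hw : w ∈ U z) : 0 < G α z w := by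
  apply Finset.sum_pos _ Finset.univ_nonempty
  intro i _
  have h1 := hw i
  have h2 : (0:ℝ) < α i := lt_of_lt_of_le one_pos (hα i)
  positivity

end AnormAux

namespace AnormAux

variable {n : ℕ} (α : Fin n → ℝ) (z : EuclideanSpace ℝ (Fin n))

def LG (w : EuclideanSpace ℝ (Fin n)) : EuclideanSpace ℝ (Fin n) →L[ℝ] ℝ :=
  ∑ i, (2 * Real.sign (z i) * (Real.sign (z i) * w i) ^ (2 * α i - 1)) •
    (EuclideanSpace.proj i : EuclideanSpace ℝ (Fin n) →L[ℝ] ℝ)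

lemma hasFDerivAt_coord (i : Fin n) (w : EuclideanSpace ℝ (Fin n)) :
    HasFDerivAt (fun w : EuclideanSpace ℝ (Fin n) => Real.sign (z i) * w i)
      (Real.sign (z i) • (EuclideanSpace.proj i : EuclideanSpace ℝ (Fin n) →L[ℝ] ℝ)) w := by
  have h := ((EuclideanSpace.proj i : EuclideanSpace ℝ (Fin n) →L[ℝ] ℝ).hasFDerivAt
    (x := w)).const_mul (Real.sign (z i))
  simpa [PiLp.proj_apply] using h

lemma hasFDerivAt_G (hα : ∀ i, 1 ≤ α i) {w : EuclideanSpace ℝ (Fin n)} (hw : w ∈ U z) :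
    HasFDerivAt (G α z) (LG α z w) w := by
  unfold G LG
  apply HasFDerivAt.fun_sum
  intro i _
  have hbase : Real.sign (z i) * w i ≠ 0 := ne_of_gt (hw i)
  have h2 := Real.hasDerivAt_rpow_const (p := 2 * α i) (Or.inl hbase)
  have h3 := h2.comp_hasFDerivAt w (hasFDerivAt_coord z i w)
  have h4 := h3.const_mul (1 / α i)
  simp only [Function.comp_def] at h4
  refine h4.congr_fderiv ?_
  ext v
  have hα0 : α i ≠ 0 := ne_of_gt (lt_of_lt_of_le one_pos (hα i))
  simp only [ContinuousLinearMap.smul_apply, ContinuousLinearMap.coe_smul', Pi.smul_apply,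
    smul_eq_mul]
  field_simp

lemma contDiffAt_G (hz : ∀ i, z i ≠ 0) : ContDiffAt ℝ 2 (G α z) z := by
  unfold G
  apply ContDiffAt.sum
  intro i _
  have hbase : Real.sign (z i) * z i ≠ 0 := by
    rw [sign_mul_self (hz i)]; exact (abs_pos.2 (hz i)).ne'
  have h1 : ContDiffAt ℝ 2 (fun w : EuclideanSpace ℝ (Fin n) => Real.sign (z i) * w i) z := by
    have h := (contDiffAt_const (c := Real.sign (z i))).mul
      (((EuclideanSpace.proj i : EuclideanSpace ℝ (Fin n) →L[ℝ] ℝ).contDiff (n := 2)).contDiffAt (x := z))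
    simpa [PiLp.proj_apply] using h
  exact contDiffAt_const.mul
    (by have := (Real.contDiffAt_rpow_const_of_ne (p := 2 * α i) hbase).comp z h1; exact this)

lemma LG_apply (w : EuclideanSpace ℝ (Fin n)) (j : Fin n) :
    LG α z w (EuclideanSpace.single j 1) =
      2 * Real.sign (z j) * (Real.sign (z j) * w j) ^ (2 * α j - 1) := by
  simp [LG, PiLp.proj_apply, EuclideanSpace.single_apply]

end AnormAux

namespace AnormAux

variable {n : ℕ} (α : Fin n → ℝ) (z : EuclideanSpace ℝ (Fin n))

lemma hasFDerivAt_sqrtG [Nonempty (Fin n)] (hα : ∀ i, 1 ≤ α i)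
    {w : EuclideanSpace ℝ (Fin n)} (hw : w ∈ U z) :
    HasFDerivAt (fun w => Real.sqrt (G α z w))
      ((1 / (2 * Real.sqrt (G α z w))) • LG α z w) w := by
  have h := (Real.hasDerivAt_sqrt (G_pos α z hα hw).ne').comp_hasFDerivAt w
    (hasFDerivAt_G α z hα hw)
  simpa [Function.comp_def] using h

def psi (j : Fin n) (w : EuclideanSpace ℝ (Fin n)) : ℝ :=
  Real.sign (z j) * (Real.sign (z j) * w j) ^ (2 * α j - 1) / Real.sqrt (G α z w)

lemma fderiv_sqrtG_apply [Nonempty (Fin n)] (hα : ∀ i, 1 ≤ α i)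
    {w : EuclideanSpace ℝ (Fin n)} (hw : w ∈ U z) (j : Fin n) :
    fderiv ℝ (fun w => Real.sqrt (G α z w)) w (EuclideanSpace.single j 1) = psi α z j w := by
  rw [(hasFDerivAt_sqrtG α z hα hw).fderiv]
  simp only [ContinuousLinearMap.smul_apply, smul_eq_mul, LG_apply]
  have hs : Real.sqrt (G α z w) ≠ 0 := (Real.sqrt_pos.2 (G_pos α z hα hw)).ne'
  unfold psi
  field_simp

lemma fderiv_psi_apply [Nonempty (Fin n)] (hα : ∀ i, 1 ≤ α i) (hz : ∀ i, z i ≠ 0)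
    (i j : Fin n) :
    fderiv ℝ (psi α z j) z (EuclideanSpace.single i 1) =
      (if i = j then (2 * α j - 1) * |z j| ^ (2 * α j - 2) / Real.sqrt (G α z z) else 0)
      - Real.sign (z i) * Real.sign (z j) * |z i| ^ (2 * α i - 1) * |z j| ^ (2 * α j - 1)
        / (Real.sqrt (G α z z)) ^ 3 := by
  have hzU := z_mem_U z hz
  have hGpos := G_pos α z hα hzU
  have hf : (0:ℝ) < Real.sqrt (G α z z) := Real.sqrt_pos.2 hGpos
  have habs : ∀ k, Real.sign (z k) * z k = |z k| := fun k => sign_mul_self (hz k)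
  have hbase : Real.sign (z j) * z j ≠ 0 := by rw [habs j]; exact (abs_pos.2 (hz j)).ne'
  -- derivative of the numerator
  have hA : HasFDerivAt (fun w : EuclideanSpace ℝ (Fin n) =>
        Real.sign (z j) * (Real.sign (z j) * w j) ^ (2 * α j - 1))
      (Real.sign (z j) • (((2 * α j - 1) * (Real.sign (z j) * z j) ^ (2 * α j - 1 - 1)) •
        (Real.sign (z j) • (EuclideanSpace.proj j : EuclideanSpace ℝ (Fin n) →L[ℝ] ℝ)))) z := by
    have h2 := Real.hasDerivAt_rpow_const (p := 2 * α j - 1) (Or.inl hbase)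
    have h3 := h2.comp_hasFDerivAt z (hasFDerivAt_coord z j z)
    have h4 := h3.const_mul (Real.sign (z j))
    simpa [Function.comp_def] using h4
  -- derivative of the inverse square root
  have hB : HasFDerivAt (fun w : EuclideanSpace ℝ (Fin n) => (Real.sqrt (G α z w))⁻¹)
      ((-(1 / (2 * Real.sqrt (G α z z))) / (Real.sqrt (G α z z)) ^ 2) • LG α z z) z := by
    have h1 := (Real.hasDerivAt_sqrt hGpos.ne').inv hf.ne'
    have h2 := h1.comp_hasFDerivAt z (hasFDerivAt_G α z hα hzU)
    simpa [Function.comp_def] using h2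
  have hpsi' : HasFDerivAt (psi α z j)
      ((Real.sign (z j) * (Real.sign (z j) * z j) ^ (2 * α j - 1)) •
          ((-(1 / (2 * Real.sqrt (G α z z))) / (Real.sqrt (G α z z)) ^ 2) • LG α z z) +
        (Real.sqrt (G α z z))⁻¹ •
          (Real.sign (z j) • (((2 * α j - 1) * (Real.sign (z j) * z j) ^ (2 * α j - 1 - 1)) •
            (Real.sign (z j) • (EuclideanSpace.proj j : EuclideanSpace ℝ (Fin n) →L[ℝ] ℝ))))) z := by
    have h := hA.fun_mul hB
    simp only [psi, div_eq_mul_inv] at h ⊢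
    exact h
  rw [hpsi'.fderiv]
  simp only [ContinuousLinearMap.add_apply, ContinuousLinearMap.smul_apply, smul_eq_mul,
    LG_apply, PiLp.proj_apply, EuclideanSpace.single_apply]
  rw [habs i, habs j]
  set g := G α z z with hg
  set f := Real.sqrt g with hfd
  rcases eq_or_ne i j with rfl | hij
  · simp only [if_pos rfl, eq_self_iff_true, if_true]
    have he : 2 * α i - 1 - 1 = 2 * α i - 2 := by ring
    rw [he]
    rcases (hz i).lt_or_gt with h | h
    · rw [Real.sign_of_neg h]; field_simp; ring
    · rw [Real.sign_of_pos h]; field_simp; ring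
  · rw [if_neg hij, if_neg (Ne.symm hij)]
    field_simp
    ring

end AnormAux


open AnormAux in
/-- Let `α_i ≥ 1` for all `i` and let `z` have all coordinates nonzero. Then `w ↦ |w|_α`
is twice differentiable at `z`, with Hessian
`D²|z|_α = (1/|z|_α) D_s ( diag(2α_i−1) − v vᵀ ) D_s`, where
`D_s = diag(sgn(z_i)|z_i|^{α_i−1})` and `v_i = |z_i|^{α_i}/|z|_α`. -/
theorem anorm_hessian {n : ℕ} (α : Fin n → ℝ) (hα : ∀ i, 1 ≤ α i)
    (z : EuclideanSpace ℝ (Fin n)) (hz : ∀ i, z i ≠ 0) :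
    ContDiffAt ℝ 2 (anorm α) z ∧
      ∀ i j, iteratedFDeriv ℝ 2 (anorm α) z
          ![EuclideanSpace.single i 1, EuclideanSpace.single j 1] =
        (1 / anorm α z) * (Real.sign (z i) * |z i| ^ (α i - 1)) *
          ((if i = j then 2 * α i - 1 else 0) -
            (|z i| ^ α i / anorm α z) * (|z j| ^ α j / anorm α z)) *
          (Real.sign (z j) * |z j| ^ (α j - 1)) := by
  rcases Nat.eq_zero_or_pos n with hn | hn
  · subst hn
    refine ⟨?_, fun i => i.elim0⟩
    have h : anorm α = fun _ => (0:ℝ) := by funext w; simp [anorm]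
    rw [h]; exact contDiffAt_const
  haveI : Nonempty (Fin n) := ⟨⟨0, hn⟩⟩
  have hzU := z_mem_U z hz
  have hnhds : U z ∈ 𝓝 z := (isOpen_U z).mem_nhds hzU
  have hGpos := G_pos α z hα hzU
  have hfpos : 0 < Real.sqrt (G α z z) := Real.sqrt_pos.2 hGpos
  have hEq : anorm α =ᶠ[𝓝 z] fun w => Real.sqrt (G α z w) :=
    Filter.eventuallyEq_of_mem hnhds fun w hw => anorm_eq α z hz hw
  have hF2 : ContDiffAt ℝ 2 (fun w => Real.sqrt (G α z w)) z :=
    (Real.contDiffAt_sqrt hGpos.ne').comp z (contDiffAt_G α z hz)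
  have hf2 : ContDiffAt ℝ 2 (anorm α) z := hF2.congr_of_eventuallyEq hEq
  refine ⟨hf2, fun i j => ?_⟩
  rw [iteratedFDeriv_two_apply]
  simp only [Matrix.cons_val_zero, Matrix.cons_val_one, Matrix.head_cons]
  rw [(hEq.fderiv).fderiv_eq]
  have hdF : DifferentiableAt ℝ (fderiv ℝ (fun w => Real.sqrt (G α z w))) z := by
    have h := hF2.fderiv_right (m := 1) (by norm_num)
    exact h.differentiableAt one_ne_zero
  have hswap : fderiv ℝ (fderiv ℝ (fun w => Real.sqrt (G α z w))) z
        (EuclideanSpace.single i 1) (EuclideanSpace.single j 1) =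
      fderiv ℝ (fun w => fderiv ℝ (fun w => Real.sqrt (G α z w)) w (EuclideanSpace.single j 1)) z
        (EuclideanSpace.single i 1) := by
    rw [fderiv_clm_apply hdF (differentiableAt_const _)]
    simp
  rw [hswap]
  have hpsiEq : (fun w => fderiv ℝ (fun w => Real.sqrt (G α z w)) w (EuclideanSpace.single j 1))
      =ᶠ[𝓝 z] psi α z j :=
    Filter.eventuallyEq_of_mem hnhds fun w hw => fderiv_sqrtG_apply α z hα hw j
  rw [hpsiEq.fderiv_eq, fderiv_psi_apply α z hα hz i j]
  -- final algebra
  rw [anorm_eq α z hz hzU]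
  have m1 : ∀ k, |z k| ^ (α k - 1) * |z k| ^ (α k) = |z k| ^ (2 * α k - 1) := fun k => by
    rw [← Real.rpow_add (abs_pos.2 (hz k))]; congr 1; ring
  have m2 : |z i| ^ (α i - 1) * |z i| ^ (α i - 1) = |z i| ^ (2 * α i - 2) := by
    rw [← Real.rpow_add (abs_pos.2 (hz i))]; congr 1; ring
  set g := G α z z with hg
  set f := Real.sqrt g with hfd
  rcases eq_or_ne i j with rfl | hij
  · simp only [if_pos rfl, eq_self_iff_true, if_true]
    rw [← m2, ← m1 i]
    rcases (hz i).lt_or_gt with h | h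
    · rw [Real.sign_of_neg h]; field_simp
    · rw [Real.sign_of_pos h]; field_simp
  · rw [if_neg hij, if_neg hij]
    rw [← m1 i, ← m1 j]
    field_simp
    ring
end
end

section
/- Let n ≥ 1, 1/2 < γ < 1, 0 ≤ p₁ ≤ … ≤ p_n, and set α_i = (1+p_i/2)/(1+γp_i/2), β_i = (1/2)/(1+p_i/2), k_i = (2−γ)p_i/2, and c₁ = (1−γ)/(1+p_n/2). Then there exists C₀ > n, depending only on n, γ and p_n, such that the following holds for every L > 0 and every a ∈ ℝⁿ with a ≠ 0. Define I = { i : (1/α_i)|a_i|^{2α_i} ≥ |a|_α²/C₀ }, w = Σ_{i∈I} (sgn(a_i)/α_i) (|a|_α^{k_i−1} / |a_i|^{α_i(k_i−1)}) e_i, z_i = sgn(a_i) L^{β_i} |a_i|^{2α_i−1} / |a|_α^{2−γ}, and Z = (1/|a|_α^{2−γ}) D ( diag(2α₁−1,…,2α_n−1) − (2−γ) v vᵀ ) D, where D = diag(sgn(a₁)L^{β₁}|a₁|^{α₁−1},…,sgn(a_n)L^{β_n}|a_n|^{α_n−1}) (with the convention 0⁰ = 1) and v_i = |a_i|^{α_i}/|a|_α.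 Then wᵀ diag(|z₁|^{p₁/2},…,|z_n|^{p_n/2}) Z diag(|z₁|^{p₁/2},…,|z_n|^{p_n/2}) w ≤ −(c₁/2) · L / |a|_α^{2−γ}. -/
noncomputable section
open Real Matrix Finset

/-- `α = (1+p/2)/(1+γp/2)`. -/
def αe (γ p : ℝ) : ℝ := (1 + p / 2) / (1 + γ * p / 2)

/-- `β = (1/2)/(1+p/2)`. -/
def βe (p : ℝ) : ℝ := (1 / 2) / (1 + p / 2)

/-- `k = (2−γ)p/2`. -/
def ke (γ p : ℝ) : ℝ := (2 - γ) * p / 2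

lemma denom_pos {γ p : ℝ} (hγ : 0 < γ) (hp : 0 ≤ p) : 0 < 1 + γ * p / 2 := by nlinarith

lemma αe_pos {γ p : ℝ} (hγ : 0 < γ) (hp : 0 ≤ p) : 0 < αe γ p :=
  div_pos (by linarith) (denom_pos hγ hp)

lemma αe_mono {γ p q : ℝ} (hγ : 0 < γ) (hγ1 : γ < 1) (hp : 0 ≤ p) (hpq : p ≤ q) :
    αe γ p ≤ αe γ q := by
  have hq : 0 ≤ q := le_trans hp hpq
  rw [αe, αe, div_le_div_iff₀ (denom_pos hγ hp) (denom_pos hγ hq)]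
  nlinarith

lemma expL {p : ℝ} (hp : 0 ≤ p) : βe p * (p / 2) + βe p = 1 / 2 := by
  have h : (1 : ℝ) + p / 2 ≠ 0 := by positivity
  rw [βe]; field_simp; ring

lemma expa {γ p : ℝ} (hγ : 0 < γ) (hp : 0 ≤ p) :
    -(αe γ p * (ke γ p - 1)) + (2 * αe γ p - 1) * (p / 2) + (αe γ p - 1) = αe γ p := by
  have h : (1 : ℝ) + γ * p / 2 ≠ 0 := ne_of_gt (denom_pos hγ hp)
  rw [αe, ke]; field_simp; ring

lemma expA {γ p : ℝ} : (ke γ p - 1) + (-((2 - γ) * (p / 2))) = -1 := by rw [ke]; ring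

lemma inv_αe {γ p : ℝ} (hγ : 0 < γ) (hp : 0 ≤ p) :
    (αe γ p)⁻¹ = γ + (1 - γ) / (1 + p / 2) := by
  have h1 : (1 : ℝ) + γ * p / 2 ≠ 0 := ne_of_gt (denom_pos hγ hp)
  have h2 : (1 : ℝ) + p / 2 ≠ 0 := by positivity
  rw [αe, inv_div]; field_simp; ring

set_option maxHeartbeats 2000000 in
/-- **Key negative quadratic-form estimate in the Hölder argument.** With
`α_i = (1+p_i/2)/(1+γp_i/2)`, `β_i = (1/2)/(1+p_i/2)`, `k_i = (2−γ)p_i/2` and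
`c₁ = (1−γ)/(1+p_n/2)`, there is `C₀ > n`, depending only on `n, γ, p_n`, such that for
every `L > 0` and `a ≠ 0`, with `I`, `w`, `z` and `Z` as in the anisotropic Ishii–Lions
argument, `wᵀ diag(|z_i|^{p_i/2}) Z diag(|z_i|^{p_i/2}) w ≤ −(c₁/2) L/|a|_α^{2−γ}`. -/
theorem key_quadratic_form_estimate (n : ℕ) (hn : 1 ≤ n) (γ pn : ℝ)
    (hγ0 : 1 / 2 < γ) (hγ1 : γ < 1) :
    ∃ C₀ : ℝ, (n : ℝ) < C₀ ∧
      ∀ p : Fin n → ℝ, (∀ i, 0 ≤ p i) → Monotone p → p ⟨n - 1, by omega⟩ = pn →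
      ∀ L : ℝ, 0 < L → ∀ a : EuclideanSpace ℝ (Fin n), a ≠ 0 →
      ∀ (I : Finset (Fin n)) (w z : Fin n → ℝ) (Z : Matrix (Fin n) (Fin n) ℝ),
        (∀ i, i ∈ I ↔ (anorm (fun i => αe γ (p i)) a) ^ 2 / C₀ ≤
            (1 / αe γ (p i)) * |a i| ^ (2 * αe γ (p i))) →
        (∀ i, w i = if i ∈ I then
            (Real.sign (a i) / αe γ (p i)) *
              ((anorm (fun i => αe γ (p i)) a) ^ (ke γ (p i) - 1) /
                |a i| ^ (αe γ (p i) * (ke γ (p i) - 1)))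
          else 0) →
        (∀ i, z i = Real.sign (a i) * L ^ βe (p i) * |a i| ^ (2 * αe γ (p i) - 1) /
            (anorm (fun i => αe γ (p i)) a) ^ (2 - γ)) →
        (∀ i j, Z i j = (1 / (anorm (fun i => αe γ (p i)) a) ^ (2 - γ)) *
            (Real.sign (a i) * L ^ βe (p i) * |a i| ^ (αe γ (p i) - 1)) *
            ((if i = j then 2 * αe γ (p i) - 1 else 0) -
              (2 - γ) * (|a i| ^ αe γ (p i) / anorm (fun i => αe γ (p i)) a) *
                (|a j| ^ αe γ (p j) / anorm (fun i => αe γ (p i)) a)) *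
            (Real.sign (a j) * L ^ βe (p j) * |a j| ^ (αe γ (p j) - 1))) →
        ∑ i, ∑ j, w i * |z i| ^ (p i / 2) * Z i j * |z j| ^ (p j / 2) * w j ≤
          -(((1 - γ) / (1 + pn / 2)) / 2) * L /
            (anorm (fun i => αe γ (p i)) a) ^ (2 - γ) := by
  have hγp : 0 < γ := by linarith
  set C₀ : ℝ := (n : ℝ) + 1 + 12 * n * (1 + |pn| / 2) / (1 - γ) with hC₀def
  have hC₀extra : 0 ≤ 12 * n * (1 + |pn| / 2) / (1 - γ) :=
    div_nonneg (by positivity) (by linarith)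
  have hC₀gt : (n : ℝ) < C₀ := by rw [hC₀def]; linarith
  have hC₀pos : 0 < C₀ := lt_of_le_of_lt (by positivity) hC₀gt
  refine ⟨C₀, hC₀gt, ?_⟩
  intro p hp hmono hpn L hL a ha I w z Z hI hw hz hZ
  clear_value C₀
  set N : Fin n := ⟨n - 1, by omega⟩ with hN
  have hpn0 : 0 ≤ pn := hpn ▸ hp N
  have hple : ∀ i, p i ≤ pn := by
    intro i
    rw [← hpn]
    refine hmono ?_
    rw [Fin.le_def]
    show (i : ℕ) ≤ n - 1
    have := i.isLt
    omega
  set A : ℝ := anorm (fun i => αe γ (p i)) a with hAdef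
  have hαpos : ∀ i, 0 < αe γ (p i) := fun i => αe_pos hγp (hp i)
  have hterm_nonneg : ∀ i, 0 ≤ (1 / αe γ (p i)) * |a i| ^ (2 * αe γ (p i)) := by
    intro i
    exact mul_nonneg (one_div_nonneg.mpr (hαpos i).le) (Real.rpow_nonneg (abs_nonneg _) _)
  have hA2 : A ^ 2 = ∑ i, (1 / αe γ (p i)) * |a i| ^ (2 * αe γ (p i)) := by
    rw [hAdef, anorm]
    exact Real.sq_sqrt (Finset.sum_nonneg fun i _ => hterm_nonneg i)
  have hApos : 0 < A := by
    obtain ⟨i0, hi0⟩ : ∃ i, a i ≠ 0 := by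
      by_contra h
      push_neg at h
      exact ha (by ext i; exact h i)
    rw [hAdef, anorm]
    apply Real.sqrt_pos.mpr
    apply Finset.sum_pos' (fun i _ => hterm_nonneg i)
    refine ⟨i0, Finset.mem_univ _, ?_⟩
    exact mul_pos (one_div_pos.mpr (hαpos i0)) (Real.rpow_pos_of_pos (abs_pos.mpr hi0) _)
  clear_value A
  have hApow : 0 < A ^ (2 - γ) := Real.rpow_pos_of_pos hApos _
  have hA2pos : 0 < A ^ 2 := pow_pos hApos 2
  -- membership facts
  have haI : ∀ i ∈ I, 0 < |a i| := by
    intro i hi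
    have h := (hI i).mp hi
    by_contra h0
    push_neg at h0
    have h1 : |a i| = 0 := le_antisymm h0 (abs_nonneg _)
    rw [h1, Real.zero_rpow (by have := hαpos i; positivity : (2 : ℝ) * αe γ (p i) ≠ 0),
      mul_zero] at h
    have : 0 < A ^ 2 / C₀ := by positivity
    linarith
  -- the vector u and scalars t
  set u : Fin n → ℝ :=
    fun i => if i ∈ I then L ^ ((1:ℝ)/2) * |a i| ^ (αe γ (p i)) / (αe γ (p i) * A) else 0
    with hu
  set t : Fin n → ℝ := fun i => (1 / αe γ (p i)) * |a i| ^ (2 * αe γ (p i)) / A ^ 2 with ht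
  clear_value u t
  -- Step 1: the key product collapse
  have hkey : ∀ i, w i * |z i| ^ (p i / 2) *
      (Real.sign (a i) * L ^ βe (p i) * |a i| ^ (αe γ (p i) - 1)) = u i := by
    intro i
    by_cases hi : i ∈ I
    · have hai : 0 < |a i| := haI i hi
      have hane : a i ≠ 0 := abs_ne_zero.mp (ne_of_gt hai)
      have hsgn : Real.sign (a i) * Real.sign (a i) = 1 := by
        rcases hane.lt_or_gt with h | h
        · rw [Real.sign_of_neg h]; norm_num
        · rw [Real.sign_of_pos h]; norm_num
      have habs : |Real.sign (a i)| = 1 := by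
        rcases hane.lt_or_gt with h | h
        · rw [Real.sign_of_neg h]; norm_num
        · rw [Real.sign_of_pos h]; norm_num
      have hz' : |z i| = L ^ βe (p i) * |a i| ^ (2 * αe γ (p i) - 1) / A ^ (2 - γ) := by
        rw [hz i, abs_div, abs_mul, abs_mul, habs, one_mul,
          abs_of_pos (Real.rpow_pos_of_pos hL _),
          abs_of_pos (Real.rpow_pos_of_pos hai _), abs_of_pos hApow]
      have hzp : |z i| ^ (p i / 2) =
          L ^ (βe (p i) * (p i / 2)) * |a i| ^ ((2 * αe γ (p i) - 1) * (p i / 2)) *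
            A ^ (-((2 - γ) * (p i / 2))) := by
        rw [hz', div_eq_mul_inv, ← Real.rpow_neg hApos.le,
          Real.mul_rpow (by positivity) (by positivity),
          Real.mul_rpow (by positivity) (by positivity),
          ← Real.rpow_mul hL.le, ← Real.rpow_mul hai.le, ← Real.rpow_mul hApos.le,
          neg_mul]
      have hw' : w i = Real.sign (a i) * (αe γ (p i))⁻¹ * A ^ (ke γ (p i) - 1) *
          |a i| ^ (-(αe γ (p i) * (ke γ (p i) - 1))) := by
        rw [hw i, if_pos hi, Real.rpow_neg hai.le]
        ring
      simp only [hu, if_pos hi]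
      calc w i * |z i| ^ (p i / 2) *
            (Real.sign (a i) * L ^ βe (p i) * |a i| ^ (αe γ (p i) - 1))
          = (Real.sign (a i) * Real.sign (a i)) * (αe γ (p i))⁻¹ *
              (L ^ (βe (p i) * (p i / 2)) * L ^ βe (p i)) *
              (|a i| ^ (-(αe γ (p i) * (ke γ (p i) - 1))) *
                |a i| ^ ((2 * αe γ (p i) - 1) * (p i / 2)) * |a i| ^ (αe γ (p i) - 1)) *
              (A ^ (ke γ (p i) - 1) * A ^ (-((2 - γ) * (p i / 2)))) := by
            rw [hw', hzp]; ring
        _ = 1 * (αe γ (p i))⁻¹ * L ^ (βe (p i) * (p i / 2) + βe (p i)) *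
              |a i| ^ (-(αe γ (p i) * (ke γ (p i) - 1)) + (2 * αe γ (p i) - 1) * (p i / 2) +
                (αe γ (p i) - 1)) *
              A ^ ((ke γ (p i) - 1) + (-((2 - γ) * (p i / 2)))) := by
            rw [hsgn, ← Real.rpow_add hL, ← Real.rpow_add hai, ← Real.rpow_add hai,
              ← Real.rpow_add hApos]
        _ = 1 * (αe γ (p i))⁻¹ * L ^ ((1:ℝ)/2) * |a i| ^ (αe γ (p i)) * A ^ (-1 : ℝ) := by
            rw [expL (hp i), expa hγp (hp i), expA]
        _ = L ^ ((1:ℝ)/2) * |a i| ^ (αe γ (p i)) / (αe γ (p i) * A) := by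
            rw [Real.rpow_neg_one]; ring
    · simp only [hu, if_neg hi, hw i, zero_mul]
  -- Step 2: each summand in terms of u
  have hsummand : ∀ i j, w i * |z i| ^ (p i / 2) * Z i j * |z j| ^ (p j / 2) * w j =
      u i * ((if i = j then 2 * αe γ (p i) - 1 else 0) -
        (2 - γ) * (|a i| ^ αe γ (p i) / A) * (|a j| ^ αe γ (p j) / A)) * u j / A ^ (2 - γ) := by
    intro i j
    rw [← hkey i, ← hkey j, hZ i j]
    ring
  -- Step 3: collapse the double sum
  have hQ : ∑ i, ∑ j, w i * |z i| ^ (p i / 2) * Z i j * |z j| ^ (p j / 2) * w j =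
      ((∑ i, (2 * αe γ (p i) - 1) * (u i * u i)) -
        (2 - γ) * (∑ i, u i * (|a i| ^ αe γ (p i) / A)) ^ 2) / A ^ (2 - γ) := by
    have hrow : ∀ i, ∑ j, w i * |z i| ^ (p i / 2) * Z i j * |z j| ^ (p j / 2) * w j =
        ((2 * αe γ (p i) - 1) * (u i * u i) -
          (2 - γ) * (u i * (|a i| ^ αe γ (p i) / A)) *
            (∑ j, u j * (|a j| ^ αe γ (p j) / A))) / A ^ (2 - γ) := by
      intro i
      have : ∀ j, w i * |z i| ^ (p i / 2) * Z i j * |z j| ^ (p j / 2) * w j =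
          ((if i = j then (2 * αe γ (p i) - 1) * (u i * u i) else 0) -
            (2 - γ) * (u i * (|a i| ^ αe γ (p i) / A)) *
              (u j * (|a j| ^ αe γ (p j) / A))) / A ^ (2 - γ) := by
        intro j
        rw [hsummand i j]
        split_ifs with hij
        · subst hij; ring
        · ring
      rw [Finset.sum_congr rfl fun j _ => this j, ← Finset.sum_div]
      congr 1
      rw [Finset.sum_sub_distrib, Finset.sum_ite_eq, if_pos (Finset.mem_univ i),
        ← Finset.mul_sum]
    rw [Finset.sum_congr rfl fun i _ => hrow i, ← Finset.sum_div]
    congr 1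
    rw [Finset.sum_sub_distrib, ← Finset.sum_mul, ← Finset.mul_sum, pow_two]
    ring
  -- Step 4: values of the building blocks
  have hLhalf : L ^ ((1:ℝ)/2) * L ^ ((1:ℝ)/2) = L := by
    rw [← Real.rpow_add hL]; norm_num
  have huv : ∀ i, u i * (|a i| ^ αe γ (p i) / A) = if i ∈ I then L ^ ((1:ℝ)/2) * t i else 0 := by
    intro i
    by_cases hi : i ∈ I
    · simp only [hu, ht, if_pos hi]
      have hai : 0 < |a i| := haI i hi
      have h2 : |a i| ^ (2 * αe γ (p i)) = |a i| ^ (αe γ (p i)) * |a i| ^ (αe γ (p i)) := by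
        rw [← Real.rpow_add hai]; ring_nf
      rw [h2]; ring
    · simp only [hu, if_neg hi, zero_mul]
  have hu2 : ∀ i, (2 * αe γ (p i) - 1) * (u i * u i) =
      if i ∈ I then L * ((2 * αe γ (p i) - 1) * (αe γ (p i))⁻¹ * t i) else 0 := by
    intro i
    by_cases hi : i ∈ I
    · simp only [hu, ht, if_pos hi]
      have hai : 0 < |a i| := haI i hi
      have h2 : |a i| ^ (2 * αe γ (p i)) = |a i| ^ (αe γ (p i)) * |a i| ^ (αe γ (p i)) := by
        rw [← Real.rpow_add hai]; ring_nf
      rw [h2]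
      conv_rhs => rw [← hLhalf]
      ring
    · simp only [hu, if_neg hi, mul_zero, zero_mul]
  set S : ℝ := ∑ i ∈ I, t i with hS
  clear_value S
  have hT : (∑ i, u i * (|a i| ^ αe γ (p i) / A)) = L ^ ((1:ℝ)/2) * S := by
    rw [Finset.sum_congr rfl fun i _ => huv i, Finset.sum_ite_mem, Finset.univ_inter, hS,
      Finset.mul_sum]
  have hU : (∑ i, (2 * αe γ (p i) - 1) * (u i * u i)) =
      L * ∑ i ∈ I, (2 * αe γ (p i) - 1) * (αe γ (p i))⁻¹ * t i := by
    rw [Finset.sum_congr rfl fun i _ => hu2 i, Finset.sum_ite_mem, Finset.univ_inter,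
      Finset.mul_sum]
  -- Step 5: facts about t and S
  have ht0 : ∀ i, 0 ≤ t i := by
    intro i
    simp only [ht]
    exact div_nonneg (hterm_nonneg i) hA2pos.le
  have hsum1 : ∑ i, t i = 1 := by
    simp only [ht]
    rw [← Finset.sum_div, ← hA2, div_self (ne_of_gt hA2pos)]
  have hS1 : S ≤ 1 := by
    rw [hS, ← hsum1]
    exact Finset.sum_le_sum_of_subset_of_nonneg (Finset.subset_univ I) fun i _ _ => ht0 i
  have hSlow : 1 - n * C₀⁻¹ ≤ S := by
    have hsplit : ∑ i ∈ Finset.univ \ I, t i + S = 1 := by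
      rw [hS, Finset.sum_sdiff (Finset.subset_univ I), hsum1]
    have hbound : ∑ i ∈ Finset.univ \ I, t i ≤ n * C₀⁻¹ := by
      calc ∑ i ∈ Finset.univ \ I, t i ≤ ∑ _i ∈ Finset.univ \ I, C₀⁻¹ := by
            apply Finset.sum_le_sum
            intro i hi
            have hi' : i ∉ I := (Finset.mem_sdiff.mp hi).2
            have hlt : (1 / αe γ (p i)) * |a i| ^ (2 * αe γ (p i)) < A ^ 2 / C₀ := by
              by_contra hc
              push_neg at hc
              exact hi' ((hI i).mpr hc)
            rw [ht]
            rw [div_le_iff₀ hA2pos]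
            have : A ^ 2 / C₀ = C₀⁻¹ * A ^ 2 := by ring
            linarith
        _ = (Finset.univ \ I).card * C₀⁻¹ := by
            rw [Finset.sum_const, nsmul_eq_mul]
        _ ≤ n * C₀⁻¹ := by
            apply mul_le_mul_of_nonneg_right _ (by positivity)
            have h1 : (Finset.univ \ I).card ≤ (Finset.univ : Finset (Fin n)).card :=
              Finset.card_le_card (Finset.sdiff_subset)
            rw [Finset.card_univ, Fintype.card_fin] at h1
            exact_mod_cast h1
    linarith
  have hS0 : 0 ≤ S := by
    rw [hS]; exact Finset.sum_nonneg fun i _ => ht0 i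
  -- Step 6: coefficient bound
  have hαNpos : 0 < αe γ pn := αe_pos hγp hpn0
  have hcoefsum : ∑ i ∈ I, (2 * αe γ (p i) - 1) * (αe γ (p i))⁻¹ * t i ≤
      (2 - (αe γ pn)⁻¹) * S := by
    rw [hS, Finset.mul_sum]
    apply Finset.sum_le_sum
    intro i _
    apply mul_le_mul_of_nonneg_right _ (ht0 i)
    have h1 := hαpos i
    have h3 : αe γ (p i) ≤ αe γ pn := αe_mono hγp hγ1 (hp i) (hple i)
    have h4 : (αe γ pn)⁻¹ ≤ (αe γ (p i))⁻¹ := by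
      apply inv_anti₀ h1 h3
    have h5 : (2 * αe γ (p i) - 1) * (αe γ (p i))⁻¹ = 2 - (αe γ (p i))⁻¹ := by
      field_simp
    rw [h5]
    linarith
  -- Step 7: the scalar inequality
  set c₁ : ℝ := (1 - γ) / (1 + pn / 2) with hc₁def
  have hc₁pos : 0 < c₁ := div_pos (by linarith) (by linarith)
  have hc₁le : c₁ ≤ 1 - γ := div_le_self (by linarith) (by linarith)
  have hc₁half : c₁ < 1 / 2 := by linarith
  have hinv : (αe γ pn)⁻¹ = γ + c₁ := by rw [hc₁def]; exact inv_αe hγp hpn0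
  clear_value c₁
  have hεbound : (n : ℝ) * C₀⁻¹ ≤ c₁ / 12 := by
    have h12 : 12 * n / c₁ ≤ C₀ := by
      have habs : |pn| = pn := abs_of_nonneg hpn0
      have : 12 * (n : ℝ) / c₁ = 12 * n * (1 + pn / 2) / (1 - γ) := by
        rw [hc₁def]
        field_simp
      rw [this, hC₀def, habs]
      have : (0:ℝ) ≤ (n : ℝ) + 1 := by positivity
      linarith
    have h13 : c₁ * (12 * (n : ℝ) / c₁) = 12 * n := by field_simp
    have h14 : 12 * (n : ℝ) ≤ c₁ * C₀ := by
      have := mul_le_mul_of_nonneg_left h12 hc₁pos.le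
      linarith
    have h15 : (n : ℝ) * C₀⁻¹ = n / C₀ := by ring
    rw [h15, div_le_div_iff₀ hC₀pos (by norm_num : (0:ℝ) < 12)]
    linarith
  have hSlow' : 1 - c₁ / 12 ≤ S := by linarith
  have hfinal : (2 - (αe γ pn)⁻¹) * S - (2 - γ) * S ^ 2 ≤ -(c₁ / 2) := by
    rw [hinv]
    have hprod : S * (1 - S) ≤ c₁ / 12 := by
      have := mul_le_mul hS1 (by linarith : 1 - S ≤ c₁ / 12) (by linarith) (by norm_num : (0:ℝ) ≤ 1)
      linarith
    have h2 : (2 - γ) * (S * (1 - S)) ≤ (3 / 2) * (c₁ / 12) := by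
      apply mul_le_mul (by linarith) hprod (mul_nonneg hS0 (by linarith)) (by norm_num)
    have h3 : c₁ * (1 - c₁ / 12) ≤ c₁ * S := mul_le_mul_of_nonneg_left hSlow' hc₁pos.le
    have h4 : c₁ * c₁ ≤ c₁ * (1 / 2) := mul_le_mul_of_nonneg_left hc₁half.le hc₁pos.le
    linarith [h2, h3, h4]
  -- Final assembly
  rw [hQ, hT, hU]
  have hTsq : (L ^ ((1:ℝ)/2) * S) ^ 2 = L * S ^ 2 := by
    rw [mul_pow, pow_two (L ^ ((1:ℝ)/2)), hLhalf]
  rw [hTsq]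
  have hnum : L * (∑ i ∈ I, (2 * αe γ (p i) - 1) * (αe γ (p i))⁻¹ * t i) -
      (2 - γ) * (L * S ^ 2) ≤ -(c₁ / 2) * L := by
    have hn1 : L * (∑ i ∈ I, (2 * αe γ (p i) - 1) * (αe γ (p i))⁻¹ * t i) ≤
        L * ((2 - (αe γ pn)⁻¹) * S) := mul_le_mul_of_nonneg_left hcoefsum hL.le
    have hn2 : L * ((2 - (αe γ pn)⁻¹) * S - (2 - γ) * S ^ 2) ≤ L * (-(c₁ / 2)) :=
      mul_le_mul_of_nonneg_left hfinal hL.le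
    linarith [hn1, hn2]
  exact div_le_div_of_nonneg_right hnum hApow.le
end
end
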